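/- arXiv:2108.01023 — 4 statements merged into one kernel-verified Lean document; each statement's English description precedes it below -/
import Mathlib

section
/- Let A ⊂ 2^{E_t} be a self-dual clutter on ground set E_t of even cardinality t. Then f_0(A^∇) = 0, f_t(A^∇) = 1, f_{t/2}(A^∇) = (1/2)·C(t, t/2), f_{(t/2)−i}(A^∇) ≤ C(t−1, (t/2)−i−1) for 1 ≤ i ≤ (t/2)−1, f_{(t/2)+j}(A^∇) ≥ C(t−1, (t/2)+j−1) for 1 ≤ j ≤ (t/2)−1, and f_{(t/2)−k}(A^∇) + f_{(t/2)+k}(A^∇) = C(t, (t/2)−k) for 1 ≤ k ≤ (t/2)−1. -/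
open Finset Polynomial

attribute [local instance] Classical.propDecidable

/-- Number of `k`-element members of the family `F` of subsets of `E_t = Fin t`. -/
noncomputable def fVec (t : ℕ) (F : Finset (Finset (Fin t))) (k : ℕ) : ℕ :=
  (F.filter fun s => s.card = k).card

/-- The family `F^* = {E_t − G : G ⊆ E_t, G ∉ F}`. -/
noncomputable def star (t : ℕ) (F : Finset (Finset (Fin t))) : Finset (Finset (Fin t)) :=
  (Finset.univ \ F).image (fun G => Gᶜ)

/-- The polynomial `Σ_k f_k(F) (x−1)^{t−k}`, whose coefficient of `x^{t−i}` is `h_i(F)`. -/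
noncomputable def hPoly (t : ℕ) (F : Finset (Finset (Fin t))) : Polynomial ℤ :=
  ∑ k ∈ Finset.range (t + 1), Polynomial.C (fVec t F k : ℤ) * (Polynomial.X - 1) ^ (t - k)

/-- Component `h_i(F)` of the long `h`-vector of `F`, defined via
`Σ_i h_i(F) x^{t−i} = Σ_i f_i(F) (x−1)^{t−i}`. -/
noncomputable def hVec (t : ℕ) (F : Finset (Finset (Fin t))) (i : ℕ) : ℤ :=
  (hPoly t F).coeff (t - i)

/-- A clutter on `E_t`: an antichain of nonempty subsets of `E_t`. -/
def IsClutter (t : ℕ) (A : Finset (Finset (Fin t))) : Prop :=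
  (∀ s ∈ A, s ≠ ∅) ∧ ∀ s ∈ A, ∀ u ∈ A, s ⊆ u → s = u

/-- The increasing family `A^∇` generated by `A` on its ground set `E_t`. -/
noncomputable def upFam (t : ℕ) (A : Finset (Finset (Fin t))) : Finset (Finset (Fin t)) :=
  Finset.univ.filter fun B => ∃ s ∈ A, s ⊆ B

/-- `B` is a blocking set of `A`: it meets every member of `A`. -/
def IsBlocking (t : ℕ) (A : Finset (Finset (Fin t))) (B : Finset (Fin t)) : Prop :=
  ∀ s ∈ A, (B ∩ s).Nonempty

/-- The blocker `𝔅(A)`: the family of inclusion-minimal blocking sets of `A`. -/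
noncomputable def blocker (t : ℕ) (A : Finset (Finset (Fin t))) : Finset (Finset (Fin t)) :=
  Finset.univ.filter fun B => IsBlocking t A B ∧ ∀ C ⊂ B, ¬ IsBlocking t A C

section Aux
variable {t : ℕ} {A : Finset (Finset (Fin t))}

variable {t : ℕ} {A : Finset (Finset (Fin t))}

lemma blocking_mono {B C : Finset (Fin t)} (h : IsBlocking t A B) (hBC : B ⊆ C) :
    IsBlocking t A C := fun s hs =>
  ((h s hs).mono (inter_subset_inter hBC (subset_refl s)))

lemma exists_min_blocking :
    ∀ B : Finset (Fin t), IsBlocking t A B → ∃ C ∈ blocker t A, C ⊆ B := by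
  intro B
  induction B using Finset.strongInduction with
  | _ B ih =>
    intro hB
    by_cases hmin : ∀ C ⊂ B, ¬ IsBlocking t A C
    · refine ⟨B, ?_, subset_rfl⟩
      simp only [blocker, mem_filter, mem_univ, true_and]
      exact ⟨hB, hmin⟩
    · push_neg at hmin
      obtain ⟨C, hCB, hC⟩ := hmin
      obtain ⟨D, hD, hDC⟩ := ih C hCB hC
      exact ⟨D, hD, hDC.trans hCB.subset⟩

lemma mem_upFam_iff (hsd : blocker t A = A) {B : Finset (Fin t)} :
    B ∈ upFam t A ↔ IsBlocking t A B := by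
  simp only [upFam, mem_filter, mem_univ, true_and]
  constructor
  · rintro ⟨s, hs, hsB⟩
    have hsb : s ∈ blocker t A := by rw [hsd]; exact hs
    simp only [blocker, mem_filter, mem_univ, true_and] at hsb
    exact blocking_mono hsb.1 hsB
  · intro hB
    obtain ⟨C, hC, hCB⟩ := exists_min_blocking B hB
    exact ⟨C, by rw [← hsd]; exact hC, hCB⟩

lemma compl_mem_iff (hsd : blocker t A = A) {B : Finset (Fin t)} :
    B ∈ upFam t A ↔ Bᶜ ∉ upFam t A := by
  rw [mem_upFam_iff hsd]
  simp only [upFam, mem_filter, mem_univ, true_and, not_exists]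
  constructor
  · rintro hB s ⟨hs, hsBc⟩
    obtain ⟨x, hx⟩ := hB s hs
    rw [mem_inter] at hx
    exact absurd hx.1 (by simpa using hsBc hx.2)
  · intro h s hs
    by_contra hempty
    refine h s ⟨hs, fun x hx => mem_compl.2 fun hxB => hempty ⟨x, mem_inter.2 ⟨hxB, hx⟩⟩⟩

lemma count_compl (hsd : blocker t A = A) {m : ℕ} (hm : m ≤ t) :
    fVec t (upFam t A) m + fVec t (upFam t A) (t - m) = t.choose m := by
  classical
  have hF : upFam t A = upFam t A := rfl
  have hfv : ∀ k, fVec t (upFam t A) k =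
      (((univ : Finset (Finset (Fin t))).filter fun B => B.card = k).filter
        fun B => B ∈ upFam t A).card := by
    intro k
    unfold fVec
    congr 1
    ext B
    simp [and_comm]
  have hcompl : (((univ : Finset (Finset (Fin t))).filter fun B => B.card = m).filter
      fun B => ¬ B ∈ upFam t A).card = fVec t (upFam t A) (t - m) := by
    rw [hfv (t - m)]
    apply Finset.card_bij (fun B _ => Bᶜ)
    · intro a ha
      simp only [mem_filter, mem_univ, true_and] at ha ⊢
      refine ⟨?_, ?_⟩
      · rw [Finset.card_compl, Fintype.card_fin, ha.1]
      · have := (compl_mem_iff hsd (B := aᶜ))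
        rw [compl_compl] at this
        exact this.mpr ha.2
    · intro a _ b _ hab
      exact compl_injective hab
    · intro b hb
      simp only [mem_filter, mem_univ, true_and] at hb
      refine ⟨bᶜ, ?_, compl_compl b⟩
      simp only [mem_filter, mem_univ, true_and]
      have hcard : bᶜ.card = m := by
        rw [Finset.card_compl, Fintype.card_fin, hb.1]
        omega
      refine ⟨hcard, ?_⟩
      intro hbc
      rw [compl_mem_iff hsd] at hbc
      rw [compl_compl] at hbc
      exact hbc hb.2
  rw [hfv m, ← hcompl, card_filter_add_card_filter_not]
  have : ((univ : Finset (Finset (Fin t))).filter fun B => B.card = m) =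
      powersetCard m (univ : Finset (Fin t)) := by
    ext B; simp [Finset.mem_powersetCard_univ]
  rw [this, Finset.card_powersetCard, card_univ, Fintype.card_fin]

lemma upFam_level_bound (hsd : blocker t A = A) {r : ℕ} (hr : r ≤ t / 2) :
    fVec t (upFam t A) r ≤ (t - 1).choose (r - 1) := by
  have hint : ((upFam t A).filter (fun s => s.card = r) :
      Set (Finset (Fin t))).Intersecting := by
    intro a ha b hb hdis
    simp only [coe_filter, Set.mem_setOf_eq] at ha hb
    have hbc : b ⊆ aᶜ := fun x hx =>
      mem_compl.2 (Finset.disjoint_right.1 hdis hx)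
    have haF := ha.1
    have hac : aᶜ ∈ upFam t A := by
      simp only [upFam, mem_filter, mem_univ, true_and] at hb ⊢
      obtain ⟨s, hs, hsb⟩ := hb.1
      exact ⟨s, hs, hsb.trans hbc⟩
    exact ((compl_mem_iff hsd).1 haF) hac
  have hsz : ((upFam t A).filter (fun s => s.card = r) :
      Set (Finset (Fin t))).Sized r := by
    intro x hx
    simp only [coe_filter, Set.mem_setOf_eq] at hx
    exact hx.2
  exact Finset.erdos_ko_rado hint hsz hr

end Aux

theorem stmt14 (t : ℕ) (ht : Even t) (A : Finset (Finset (Fin t)))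
    (hA : IsClutter t A) (hsd : blocker t A = A) :
    fVec t (upFam t A) 0 = 0 ∧ fVec t (upFam t A) t = 1 ∧
      2 * fVec t (upFam t A) (t / 2) = t.choose (t / 2) ∧
      (∀ i, 1 ≤ i → i ≤ t / 2 - 1 →
        fVec t (upFam t A) (t / 2 - i) ≤ (t - 1).choose (t / 2 - i - 1)) ∧
      (∀ j, 1 ≤ j → j ≤ t / 2 - 1 →
        (t - 1).choose (t / 2 + j - 1) ≤ fVec t (upFam t A) (t / 2 + j)) ∧
      (∀ k, 1 ≤ k → k ≤ t / 2 - 1 →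
        fVec t (upFam t A) (t / 2 - k) + fVec t (upFam t A) (t / 2 + k) =
          t.choose (t / 2 - k)) := by
  have hpar : t % 2 = 0 := Nat.even_iff.mp ht
  have hAne : A.Nonempty := by
    rcases A.eq_empty_or_nonempty with h | h
    · exfalso
      have hmem : (∅ : Finset (Fin t)) ∈ blocker t A := by
        simp only [blocker, mem_filter, mem_univ, true_and]
        constructor
        · intro s hs; rw [h] at hs; exact absurd hs (notMem_empty _)
        · intro C hC; exact absurd hC (by simp)
      rw [hsd, h] at hmem
      exact absurd hmem (notMem_empty _)
    · exact h
  have h0 : fVec t (upFam t A) 0 = 0 := by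
    rw [fVec, Finset.card_eq_zero, Finset.filter_eq_empty_iff]
    intro B hB hc
    rw [Finset.card_eq_zero] at hc
    subst hc
    simp only [upFam, mem_filter, mem_univ, true_and] at hB
    obtain ⟨s, hs, hsub⟩ := hB
    exact hA.1 s hs (subset_empty.mp hsub)
  have htop : fVec t (upFam t A) t = 1 := by
    rw [fVec]
    have : (upFam t A).filter (fun s => s.card = t) = {(univ : Finset (Fin t))} := by
      ext B
      simp only [mem_filter, mem_singleton]
      constructor
      · rintro ⟨-, hc⟩
        exact Finset.card_eq_iff_eq_univ B |>.1 (by simpa using hc)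
      · rintro rfl
        obtain ⟨s, hs⟩ := hAne
        refine ⟨?_, by simp⟩
        simp only [upFam, mem_filter, mem_univ, true_and]
        exact ⟨s, hs, subset_univ s⟩
    rw [this, card_singleton]
  refine ⟨h0, htop, ?_, ?_, ?_, ?_⟩
  · have key := count_compl hsd (m := t / 2) (by omega)
    have heq : t - t / 2 = t / 2 := by omega
    rw [heq] at key
    omega
  · intro i h1 h2
    exact upFam_level_bound hsd (by omega)
  · intro j h1 h2
    have key := count_compl hsd (m := t / 2 - j) (by omega)
    have heq : t - (t / 2 - j) = t / 2 + j := by omega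
    rw [heq] at key
    have ub := upFam_level_bound hsd (r := t / 2 - j) (by omega)
    have hpas : t.choose (t / 2 - j) =
        (t - 1).choose (t / 2 - j - 1) + (t - 1).choose (t / 2 - j) := by
      obtain ⟨t', rfl⟩ : ∃ t', t = t' + 1 := ⟨t - 1, by omega⟩
      obtain ⟨m', hm'⟩ : ∃ m', (t' + 1) / 2 - j = m' + 1 := ⟨(t' + 1) / 2 - j - 1, by omega⟩
      rw [hm']
      simp [Nat.choose_succ_succ]
    have hsym : (t - 1).choose (t / 2 - j) = (t - 1).choose (t / 2 + j - 1) := by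
      have h1' : t / 2 + j - 1 = (t - 1) - (t / 2 - j) := by omega
      rw [h1', Nat.choose_symm (by omega)]
    omega
  · intro k h1 h2
    have key := count_compl hsd (m := t / 2 - k) (by omega)
    have heq : t - (t / 2 - k) = t / 2 + k := by omega
    rw [heq] at key
    exact key
end

section
/- For a family F ⊂ 2^{E_t} with F^* = F, one has h_ℓ(F) = δ_{ℓ,0} + (−1)^{ℓ+1} Σ_{k=ℓ}^t C(k,ℓ) h_k(F) for all 0 ≤ ℓ ≤ t; in particular, if t is even then h_t(F) = 0. -/
open Finset Polynomial

attribute [local instance] Classical.propDecidable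

lemma coeffXsub (n k : ℕ) : ((X - 1 : ℤ[X])^n).coeff k = (-1)^(n-k) * n.choose k := by
  rw [show (X - 1 : ℤ[X]) = X + C (-1) by simp [sub_eq_add_neg], coeff_X_add_C_pow]

lemma basisB (t j : ℕ) (hj : j ≤ t) :
    ∑ k ∈ Finset.range (t + 1),
      C (((X - 1 : ℤ[X])^(t-j)).coeff (t-k)) * (X^(t-k) * (X-1)^k) = (X-1)^j := by
  rw [Finset.range_eq_Ico, ← Finset.sum_Ico_consecutive _ (Nat.zero_le j) (by omega : j ≤ t+1)]
  have hzero : ∑ k ∈ Finset.Ico 0 j,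
      C (((X - 1 : ℤ[X])^(t-j)).coeff (t-k)) * (X^(t-k) * (X-1)^k) = 0 := by
    apply Finset.sum_eq_zero
    intro k hk
    simp only [Finset.mem_Ico] at hk
    rw [coeffXsub]
    have : (t-j).choose (t-k) = 0 := Nat.choose_eq_zero_of_lt (by omega)
    simp [this]
  rw [hzero, zero_add, Finset.sum_Ico_eq_sum_range]
  have hn : t + 1 - j = (t - j) + 1 := by omega
  rw [hn]
  set n := t - j with hdefn
  have hstep : ∀ m ∈ Finset.range (n+1),
      C (((X - 1 : ℤ[X])^n).coeff (t-(j+m))) * (X^(t-(j+m)) * (X-1)^(j+m))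
      = (X-1)^j * ((1 - X)^m * X^(n-m) * C ((n.choose m : ℤ))) := by
    intro m hm
    simp only [Finset.mem_range] at hm
    have h1 : t - (j + m) = n - m := by omega
    have h2 : n - (n - m) = m := by omega
    rw [h1, coeffXsub, h2, Nat.choose_symm (show m ≤ n by omega)]
    have h3 : (1 - X : ℤ[X])^m = C ((-1)^m) * (X-1)^m := by
      rw [show (1 - X : ℤ[X]) = C (-1) * (X - 1) by rw [map_neg, C_1]; ring,
        mul_pow, ← C_pow]
    rw [h3]
    simp only [C_mul]
    ring
  rw [Finset.sum_congr rfl hstep, ← Finset.mul_sum]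
  have : ∑ m ∈ Finset.range (n+1), (1 - X : ℤ[X])^m * X^(n-m) * C ((n.choose m : ℤ))
      = ((1 - X) + X)^n := by
    rw [add_pow]
    apply Finset.sum_congr rfl
    intro m _
    rw [C_eq_natCast]
  rw [this, sub_add_cancel, one_pow, mul_one]

lemma fdual (t : ℕ) (F : Finset (Finset (Fin t))) (hF : star t F = F) (k : ℕ) (hk : k ≤ t) :
    (fVec t F k : ℤ) = t.choose k - fVec t F (t - k) := by
  have h1 : fVec t F k = fVec t (star t F) k := by rw [hF]
  have hinj : Function.Injective (fun G : Finset (Fin t) => Gᶜ) := fun a b h => by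
    simpa using congrArg (·ᶜ) h
  have h2 : fVec t (star t F) k = ((Finset.univ \ F).filter fun G => Gᶜ.card = k).card := by
    unfold fVec _root_.star
    rw [Finset.filter_image, Finset.card_image_of_injective _ hinj]
  have h3 : ∀ G : Finset (Fin t), (Gᶜ.card = k ↔ G.card = t - k) := by
    intro G
    rw [Finset.card_compl, Fintype.card_fin]
    have := Finset.card_le_univ G
    simp only [Finset.card_univ, Fintype.card_fin] at this
    omega
  have h4 : ((Finset.univ \ F).filter fun G => Gᶜ.card = k)
      = (Finset.univ.filter fun G : Finset (Fin t) => G.card = t - k) \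
        (F.filter fun G => G.card = t - k) := by
    ext G
    simp only [Finset.mem_filter, Finset.mem_sdiff, Finset.mem_univ, true_and, h3 G]
    tauto
  have h5 : (Finset.univ.filter fun G : Finset (Fin t) => G.card = t - k).card
      = t.choose (t - k) := by
    have he : (Finset.univ.filter fun G : Finset (Fin t) => G.card = t - k)
        = Finset.powersetCard (t - k) Finset.univ := by
      rw [Finset.powersetCard_eq_filter, Finset.powerset_univ]
    rw [he, Finset.card_powersetCard, Finset.card_univ, Fintype.card_fin]
  have hsub : (F.filter fun G => G.card = t - k) ⊆
      (Finset.univ.filter fun G : Finset (Fin t) => G.card = t - k) :=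
    Finset.filter_subset_filter _ (Finset.subset_univ F)
  have hle : (F.filter fun G => G.card = t - k).card ≤ t.choose (t - k) := by
    rw [← h5]; exact Finset.card_le_card hsub
  have := Finset.card_sdiff_of_subset hsub
  rw [h1, h2, h4, this, h5]
  rw [Nat.choose_symm hk] at hle ⊢
  push_cast [Nat.cast_sub hle]
  rfl

lemma hpoly_eq (t : ℕ) (F : Finset (Finset (Fin t))) (hF : star t F = F) :
    hPoly t F = X^t - ∑ j ∈ Finset.range (t + 1), C (fVec t F j : ℤ) * (X - 1)^j := by
  have step : hPoly t F = ∑ k ∈ Finset.range (t + 1),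
      ((C ((t.choose k : ℤ)) - C ((fVec t F (t - k) : ℤ))) * (X - 1)^(t-k)) := by
    unfold hPoly
    apply Finset.sum_congr rfl
    intro k hk
    simp only [Finset.mem_range] at hk
    rw [fdual t F hF k (by omega), map_sub]
  rw [step]
  simp only [sub_mul]
  rw [Finset.sum_sub_distrib]
  congr 1
  · have e1 : ∑ k ∈ Finset.range (t+1), C ((t.choose k : ℤ)) * (X - 1 : ℤ[X])^(t-k)
        = ∑ k ∈ Finset.range (t+1), C ((t.choose (t-k) : ℤ)) * (X - 1 : ℤ[X])^k := by
      conv_rhs => rw [← Finset.sum_range_reflect]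
      apply Finset.sum_congr rfl
      intro k hk
      simp only [Finset.mem_range] at hk
      have h1 : t + 1 - 1 - k = t - k := by omega
      have h2 : t - (t - k) = k := by omega
      rw [h1, h2]
    rw [e1, show (X : ℤ[X])^t = ((X - 1) + 1)^t by ring, add_pow]
    apply Finset.sum_congr rfl
    intro k hk
    simp only [Finset.mem_range] at hk
    rw [Nat.choose_symm (show k ≤ t by omega), C_eq_natCast, one_pow]
    ring
  · rw [← Finset.sum_range_reflect]
    apply Finset.sum_congr rfl
    intro j hj
    simp only [Finset.mem_range] at hj
    have h1 : t + 1 - 1 - j = t - j := by omega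
    have h2 : t - (t - j) = j := by omega
    rw [h1, h2]

lemma keyPoly (t : ℕ) (F : Finset (Finset (Fin t))) (hF : star t F = F) :
    hPoly t F = X^t - ∑ k ∈ Finset.range (t + 1),
      C (hVec t F k) * (X^(t-k) * (X - 1)^k) := by
  have hmain : ∑ k ∈ Finset.range (t + 1), C (hVec t F k) * ((X : ℤ[X])^(t-k) * (X - 1)^k)
      = ∑ j ∈ Finset.range (t + 1), C (fVec t F j : ℤ) * (X - 1)^j := by
    have hh : ∀ k, hVec t F k
        = ∑ j ∈ Finset.range (t + 1), (fVec t F j : ℤ) * ((X - 1 : ℤ[X])^(t-j)).coeff (t-k) := by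
      intro k
      unfold hVec hPoly
      rw [Polynomial.finset_sum_coeff]
      apply Finset.sum_congr rfl
      intro j _
      rw [Polynomial.coeff_C_mul]
    calc ∑ k ∈ Finset.range (t + 1), C (hVec t F k) * ((X : ℤ[X])^(t-k) * (X - 1)^k)
        = ∑ k ∈ Finset.range (t + 1), ∑ j ∈ Finset.range (t + 1),
            C (fVec t F j : ℤ) * (C (((X - 1 : ℤ[X])^(t-j)).coeff (t-k)) * (X^(t-k) * (X-1)^k)) := by
          apply Finset.sum_congr rfl
          intro k _
          rw [hh k, map_sum, Finset.sum_mul]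
          apply Finset.sum_congr rfl
          intro j _
          rw [map_mul]
          ring
      _ = ∑ j ∈ Finset.range (t + 1), C (fVec t F j : ℤ) * ∑ k ∈ Finset.range (t + 1),
            C (((X - 1 : ℤ[X])^(t-j)).coeff (t-k)) * (X^(t-k) * (X-1)^k) := by
          rw [Finset.sum_comm]
          apply Finset.sum_congr rfl
          intro j _
          rw [Finset.mul_sum]
      _ = ∑ j ∈ Finset.range (t + 1), C (fVec t F j : ℤ) * (X - 1)^j := by
          apply Finset.sum_congr rfl
          intro j hj
          simp only [Finset.mem_range] at hj
          rw [basisB t j (by omega)]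
  rw [hmain, hpoly_eq t F hF]

theorem stmt15 (t : ℕ) (F : Finset (Finset (Fin t))) (hF : star t F = F) :
    (∀ ℓ ≤ t, hVec t F ℓ = (if ℓ = 0 then 1 else 0) +
        (-1) ^ (ℓ + 1) * ∑ k ∈ Finset.Icc ℓ t, (k.choose ℓ : ℤ) * hVec t F k) ∧
      (Even t → hVec t F t = 0) := by
  have key := keyPoly t F hF
  have main : ∀ ℓ ≤ t, hVec t F ℓ = (if ℓ = 0 then 1 else 0) +
      (-1) ^ (ℓ + 1) * ∑ k ∈ Finset.Icc ℓ t, (k.choose ℓ : ℤ) * hVec t F k := by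
    intro ℓ hℓ
    have hc : hVec t F ℓ = (hPoly t F).coeff (t - ℓ) := rfl
    rw [hc, key, Polynomial.coeff_sub, Polynomial.finset_sum_coeff]
    have hXt : ((X : ℤ[X])^t).coeff (t - ℓ) = if ℓ = 0 then 1 else 0 := by
      rw [Polynomial.coeff_X_pow]
      by_cases h : ℓ = 0
      · simp [h]
      · rw [if_neg (by omega), if_neg h]
    have hsum : ∑ k ∈ Finset.range (t+1),
        (C (hVec t F k) * ((X:ℤ[X])^(t-k) * (X-1)^k)).coeff (t-ℓ)
        = (-1)^ℓ * ∑ k ∈ Finset.Icc ℓ t, (k.choose ℓ : ℤ) * hVec t F k := by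
      rw [Finset.range_eq_Ico,
        ← Finset.sum_Ico_consecutive _ (Nat.zero_le ℓ) (by omega : ℓ ≤ t+1)]
      have hz : ∑ k ∈ Finset.Ico 0 ℓ,
          (C (hVec t F k) * ((X:ℤ[X])^(t-k) * (X-1)^k)).coeff (t-ℓ) = 0 := by
        apply Finset.sum_eq_zero
        intro k hk
        simp only [Finset.mem_Ico] at hk
        rw [Polynomial.coeff_C_mul, Polynomial.coeff_X_pow_mul']
        rw [if_neg (by omega)]
        ring
      rw [hz, zero_add]
      have hterm : ∀ k ∈ Finset.Ico ℓ (t+1),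
          (C (hVec t F k) * ((X:ℤ[X])^(t-k) * (X-1)^k)).coeff (t-ℓ)
          = (-1)^ℓ * ((k.choose ℓ : ℤ) * hVec t F k) := by
        intro k hk
        simp only [Finset.mem_Ico] at hk
        rw [Polynomial.coeff_C_mul, Polynomial.coeff_X_pow_mul', if_pos (by omega)]
        have h1 : t - ℓ - (t - k) = k - ℓ := by omega
        have h2 : k - (k - ℓ) = ℓ := by omega
        rw [h1, coeffXsub, h2, Nat.choose_symm (show ℓ ≤ k by omega)]
        ring
      rw [Finset.sum_congr rfl hterm, ← Finset.mul_sum, Finset.Ico_add_one_right_eq_Icc ℓ t]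
    rw [hXt, hsum, pow_succ]
    ring
  refine ⟨main, fun ht => ?_⟩
  have h1 := main t le_rfl
  rw [Finset.Icc_self, Finset.sum_singleton, Nat.choose_self] at h1
  have h2 : (-1 : ℤ) ^ (t + 1) = -1 := by
    rw [pow_succ, Even.neg_one_pow ht]
    ring
  rw [h2] at h1
  by_cases h : t = 0
  · rw [if_pos h] at h1
    omega
  · rw [if_neg h] at h1
    push_cast at h1
    omega
end

section
/- For a family F ⊂ 2^{E_t} with F^* = F and ℓ even with 2 ≤ ℓ ≤ t, one has Σ_{k=ℓ}^t C(k, ℓ−1) h_k(F) = 0. -/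
open Finset Polynomial

attribute [local instance] Classical.propDecidable

lemma fVec_dual (t : ℕ) (F : Finset (Finset (Fin t))) (hF : star t F = F)
    (k : ℕ) (hk : k ≤ t) :
    (fVec t F k : ℤ) + (fVec t F (t - k) : ℤ) = (t.choose k : ℤ) := by
  have key : fVec t F (t - k) = ((Finset.univ \ F).filter fun s => s.card = k).card := by
    have hFe : F = (Finset.univ \ F).image (fun G => Gᶜ) := hF.symm
    rw [fVec]
    conv_lhs => rw [hFe]
    rw [Finset.filter_image, Finset.card_image_of_injective _ compl_injective]
    congr 1
    apply Finset.filter_congr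
    intro s _
    simp only [Finset.card_compl, Fintype.card_fin, eq_iff_iff]
    have hs : s.card ≤ t := by
      simpa using Finset.card_le_card (Finset.subset_univ s)
    omega
  have huniv : ((Finset.univ.filter fun s : Finset (Fin t) => s.card = k)).card = t.choose k := by
    rw [← Finset.powerset_univ, ← Finset.powersetCard_eq_filter, Finset.card_powersetCard,
      Finset.card_univ, Fintype.card_fin]
  have hsplit : (Finset.univ.filter fun s : Finset (Fin t) => s.card = k).card
      = (F.filter fun s => s.card = k).card
        + ((Finset.univ \ F).filter fun s => s.card = k).card := by
    rw [← Finset.card_union_of_disjoint, ← Finset.filter_union,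
      Finset.union_sdiff_of_subset (Finset.subset_univ F)]
    exact Finset.disjoint_filter_filter Finset.disjoint_sdiff
  rw [fVec, key]
  push_cast
  rw [← huniv, hsplit]
  push_cast
  ring

lemma reflect_one_Xsub1 : reflect 1 (X - 1 : Polynomial ℤ) = 1 - X := by
  have h : (X - 1 : Polynomial ℤ) = X ^ 1 + C (-1) * X ^ 0 := by
    simp; ring
  rw [h, reflect_add, reflect_monomial, reflect_C_mul_X_pow]
  simp [revAt_le]
  ring

lemma reflect_Xsub1_pow : ∀ m : ℕ, reflect m ((X - 1 : Polynomial ℤ) ^ m) = (1 - X) ^ m := by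
  intro m
  induction m with
  | zero => simp
  | succ m ih =>
    have hXm : (X - 1 : Polynomial ℤ) ^ (m + 1) = (X - 1) * (X - 1) ^ m := by ring
    have hd1 : (X - 1 : Polynomial ℤ).natDegree ≤ 1 := by
      simpa using natDegree_X_sub_C_le (1 : ℤ)
    have hdm : ((X - 1 : Polynomial ℤ) ^ m).natDegree ≤ m := by
      calc ((X - 1 : Polynomial ℤ) ^ m).natDegree ≤ m * (X - 1 : Polynomial ℤ).natDegree :=
            natDegree_pow_le
        _ ≤ m * 1 := Nat.mul_le_mul_left m hd1
        _ = m := by omega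
    have hmul := reflect_mul (X - 1 : Polynomial ℤ) ((X - 1) ^ m) hd1 hdm
    rw [show (1 : ℕ) + m = m + 1 from by omega] at hmul
    rw [hXm, hmul, ih, reflect_one_Xsub1]
    ring

lemma reflect_Xsub1_pow' (t k : ℕ) (hk : k ≤ t) :
    reflect t ((X - 1 : Polynomial ℤ) ^ (t - k)) = X ^ k * (1 - X) ^ (t - k) := by
  have hdm : ((X - 1 : Polynomial ℤ) ^ (t - k)).natDegree ≤ t - k := by
    have hd1 : (X - 1 : Polynomial ℤ).natDegree ≤ 1 := by
      simpa using natDegree_X_sub_C_le (1 : ℤ)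
    calc ((X - 1 : Polynomial ℤ) ^ (t-k)).natDegree ≤ (t-k) * (X - 1 : Polynomial ℤ).natDegree :=
          natDegree_pow_le
      _ ≤ (t-k) * 1 := Nat.mul_le_mul_left _ hd1
      _ = t - k := by omega
  have hmul := reflect_mul (1 : Polynomial ℤ) ((X - 1) ^ (t - k)) (F := k) (G := t - k) (by simp) hdm
  rw [show k + (t - k) = t from by omega, one_mul] at hmul
  rw [hmul, reflect_one, reflect_Xsub1_pow]

set_option maxRecDepth 8000 in
theorem stmt16 (t : ℕ) (F : Finset (Finset (Fin t))) (hF : star t F = F)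
    (ℓ : ℕ) (hℓeven : Even ℓ) (hℓ2 : 2 ≤ ℓ) (hℓt : ℓ ≤ t) :
    ∑ k ∈ Finset.Icc ℓ t, (k.choose (ℓ - 1) : ℤ) * hVec t F k = 0 := by
  set n : ℕ := ℓ - 1 with hn
  set P : Polynomial ℤ := reflect t (hPoly t F) with hPdef
  -- P as explicit sum
  have hPform : P = ∑ k ∈ Finset.range (t + 1),
      C (fVec t F k : ℤ) * (X ^ k * (1 - X) ^ (t - k)) := by
    rw [hPdef, hPoly]
    have hrs : ∀ (s : Finset ℕ) (g : ℕ → Polynomial ℤ),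
        reflect t (∑ k ∈ s, g k) = ∑ k ∈ s, reflect t (g k) := by
      intro s g
      induction s using Finset.cons_induction with
      | empty => simp [reflect_zero]
      | cons a s ha ih => rw [Finset.sum_cons, Finset.sum_cons, reflect_add, ih]
    rw [hrs]
    refine Finset.sum_congr rfl fun k hk => ?_
    rw [Finset.mem_range] at hk
    rw [reflect_C_mul, reflect_Xsub1_pow' t k (by omega)]
  -- degree bound
  have hdegP : P.natDegree < t + 1 := by
    rw [hPform]
    refine Nat.lt_succ_of_le (le_trans (natDegree_sum_le _ _) ?_)
    rw [Finset.fold_max_le]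
    refine ⟨Nat.zero_le _, fun k hk => ?_⟩
    rw [Finset.mem_range] at hk
    simp only [Function.comp_apply]
    refine le_trans (natDegree_mul_le) ?_
    have h1 : ((X : Polynomial ℤ) ^ k * (1 - X) ^ (t - k)).natDegree ≤ t := by
      refine le_trans (natDegree_mul_le) ?_
      have h2 : ((1 - X : Polynomial ℤ) ^ (t - k)).natDegree ≤ t - k := by
        calc ((1 - X : Polynomial ℤ) ^ (t - k)).natDegree
            ≤ (t - k) * (1 - X : Polynomial ℤ).natDegree := natDegree_pow_le
          _ ≤ (t - k) * 1 := Nat.mul_le_mul_left _ (by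
              have : (1 - X : Polynomial ℤ) = -(X - C 1) := by rw [map_one]; ring
              rw [this, natDegree_neg]; exact natDegree_X_sub_C_le 1)
          _ = t - k := by omega
      have h3 : ((X : Polynomial ℤ) ^ k).natDegree ≤ k := by simp
      omega
    simpa using h1
  -- duality
  have hdual : P + P.comp (1 - X) = 1 := by
    have hc : P.comp (1 - X) = ∑ k ∈ Finset.range (t + 1),
        C (fVec t F (t - k) : ℤ) * (X ^ k * (1 - X) ^ (t - k)) := by
      rw [hPform, Polynomial.sum_comp]
      have e1 : ∀ k ∈ Finset.range (t + 1),
          (C (fVec t F k : ℤ) * (X ^ k * (1 - X) ^ (t - k))).comp (1 - X)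
            = C (fVec t F k : ℤ) * ((1 - X) ^ k * X ^ (t - k)) := by
        intro k _
        simp [mul_comp, pow_comp, sub_comp, one_comp, X_comp]
      rw [Finset.sum_congr rfl e1]
      have := Finset.sum_range_reflect
        (fun k => C (fVec t F k : ℤ) * ((1 - X) ^ k * X ^ (t - k))) (t + 1)
      rw [← this]
      refine Finset.sum_congr rfl fun k hk => ?_
      rw [Finset.mem_range] at hk
      rw [show t + 1 - 1 - k = t - k from by omega, show t - (t - k) = k from by omega]
      ring
    rw [hc, hPform, ← Finset.sum_add_distrib]
    have e2 : ∀ k ∈ Finset.range (t + 1),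
        C (fVec t F k : ℤ) * (X ^ k * (1 - X) ^ (t - k))
          + C (fVec t F (t - k) : ℤ) * (X ^ k * (1 - X) ^ (t - k))
        = X ^ k * (1 - X) ^ (t - k) * ((t.choose k : ℕ) : Polynomial ℤ) := by
      intro k hk
      rw [Finset.mem_range] at hk
      rw [← add_mul, ← C_add, fVec_dual t F hF k (by omega)]
      rw [C_eq_natCast]
      ring
    rw [Finset.sum_congr rfl e2, ← add_pow]
    norm_num
  -- taylor 1 applied
  have htay : taylor 1 P + P.comp (-X) = 1 := by
    have h := congrArg (taylor (1 : ℤ)) hdual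
    rw [map_add, taylor_one] at h
    rw [taylor_apply (f := P.comp (1 - X)), comp_assoc] at h
    have : ((1 : Polynomial ℤ) - X).comp (X + C 1) = -X := by
      simp only [sub_comp, one_comp, X_comp, C_1]; ring
    rw [this] at h
    simpa using h
  have hnt : n ≤ t := by omega
  have hnodd : Odd n := Nat.Even.sub_odd (by omega) hℓeven (by norm_num)
  -- coefficient computations
  have hT : (taylor 1 P).coeff n
      = ∑ i ∈ Finset.range (t + 1), P.coeff i * (i.choose n : ℤ) := by
    conv_lhs => rw [as_sum_range' P (t + 1) hdegP]
    rw [map_sum, finset_sum_coeff]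
    refine Finset.sum_congr rfl fun i _ => ?_
    rw [taylor_monomial, coeff_C_mul]
    congr 1
    simpa using coeff_X_add_one_pow ℤ i n
  have hN : (P.comp (-X)).coeff n = (-1) ^ n * P.coeff n := by
    conv_lhs => rw [as_sum_range' P (t + 1) hdegP]
    rw [Polynomial.sum_comp, finset_sum_coeff]
    have hterm : ∀ i : ℕ, ((monomial i (P.coeff i)).comp (-X) : Polynomial ℤ).coeff n
        = if n = i then (-1) ^ i * P.coeff i else 0 := by
      intro i
      rw [monomial_comp, neg_pow,
        show ((-1 : Polynomial ℤ) ^ i) = C ((-1 : ℤ) ^ i) by rw [map_pow, map_neg, map_one],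
        ← mul_assoc, ← C_mul, coeff_C_mul, coeff_X_pow]
      split_ifs with h
      · ring
      · ring
    rw [Finset.sum_congr rfl fun i _ => hterm i, Finset.sum_ite_eq, if_pos
      (by rw [Finset.mem_range]; omega)]
  have hkey : ∑ i ∈ Finset.range (t + 1), P.coeff i * (i.choose n : ℤ) = P.coeff n := by
    have h := congrArg (fun q => Polynomial.coeff q n) htay
    simp only [coeff_add] at h
    rw [hT, hN, hnodd.neg_one_pow] at h
    have h1 : (1 : Polynomial ℤ).coeff n = 0 := by
      rw [coeff_one]; simp; omega
    rw [h1] at h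
    linarith
  -- split the sum
  have hsplit : ∑ i ∈ Finset.range (t + 1), P.coeff i * (i.choose n : ℤ)
      = ∑ i ∈ Finset.range ℓ, P.coeff i * (i.choose n : ℤ)
        + ∑ i ∈ Finset.Icc ℓ t, P.coeff i * (i.choose n : ℤ) := by
    rw [Finset.range_eq_Ico, ← Finset.sum_Ico_consecutive _ (Nat.zero_le ℓ) (by omega),
      ← Finset.range_eq_Ico, Finset.Ico_add_one_right_eq_Icc]
  have hlow : ∑ i ∈ Finset.range ℓ, P.coeff i * (i.choose n : ℤ) = P.coeff n := by
    rw [Finset.sum_eq_single_of_mem n (by rw [Finset.mem_range]; omega)]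
    · simp
    · intro i hi hne
      rw [Finset.mem_range] at hi
      have hlt : i < n := by omega
      simp [Nat.choose_eq_zero_of_lt hlt]
  have hIcc0 : ∑ i ∈ Finset.Icc ℓ t, P.coeff i * (i.choose n : ℤ) = 0 := by
    have := hkey
    rw [hsplit, hlow] at this
    linarith
  -- convert to hVec
  have hcoeff : ∀ i, i ≤ t → P.coeff i = hVec t F i := by
    intro i hi
    rw [hPdef, coeff_reflect, revAt_le hi]
    rfl
  rw [← hIcc0]
  refine Finset.sum_congr rfl fun k hk => ?_
  rw [Finset.mem_Icc] at hk
  rw [hcoeff k hk.2, hn, mul_comm]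
end

section
/- For a family F ⊂ 2^{E_t} with F^* = F, one has Σ_{k=2}^t k·h_k(F) = 0 (and when t is even, also h_t(F) = 0). -/
open Finset Polynomial

attribute [local instance] Classical.propDecidable

/- ### Auxiliary lemmas -/

lemma coeff_sub_one_pow (m j : ℕ) :
    ((X - 1 : Polynomial ℤ) ^ m).coeff j = (-1) ^ (m - j) * m.choose j := by
  have : (X - 1 : Polynomial ℤ) ^ m = ∑ k ∈ Finset.range (m+1),
      C ((-1) ^ (m - k) * (m.choose k : ℤ)) * X ^ k := by
    rw [sub_eq_add_neg, add_pow]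
    refine Finset.sum_congr rfl fun k _ => ?_
    simp [C_mul, mul_comm, mul_assoc, mul_left_comm]
  rw [this, finset_sum_coeff]
  simp only [coeff_C_mul, coeff_X_pow, mul_ite, mul_one, mul_zero]
  rw [Finset.sum_ite_eq (Finset.range (m+1)) j]
  by_cases h : j ≤ m
  · simp [Nat.lt_succ_of_le h]
  · simp [Nat.choose_eq_zero_of_lt (Nat.lt_of_not_le h), h]

lemma A0 (N m : ℕ) (h : m ≤ N) :
    ∑ j ∈ Finset.range (N+1), (-1:ℤ) ^ (m - j) * m.choose j
      = if m = 0 then 1 else 0 := by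
  rw [← Int.alternating_sum_range_choose (n := m)]
  rw [← Finset.sum_subset (Finset.range_subset_range.2 (Nat.succ_le_succ h))
    (by intro j _ hj
        rw [Finset.mem_range, Nat.lt_succ_iff, not_le] at hj
        simp [Nat.choose_eq_zero_of_lt hj])]
  rw [← Finset.sum_range_reflect (fun j => (-1:ℤ) ^ j * m.choose j) (m+1)]
  refine Finset.sum_congr rfl fun j hj => ?_
  rw [Finset.mem_range, Nat.lt_succ_iff] at hj
  rw [Nat.add_sub_cancel, Nat.choose_symm hj]

lemma A1 (N m : ℕ) (h : m ≤ N) :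
    ∑ j ∈ Finset.range (N+1), (j : ℤ) * ((-1:ℤ) ^ (m - j) * m.choose j)
      = if m = 1 then 1 else 0 := by
  cases m with
  | zero =>
    rw [if_neg (by norm_num)]
    refine Finset.sum_eq_zero fun j _ => ?_
    cases j with
    | zero => simp
    | succ j => simp [Nat.choose_eq_zero_of_lt (Nat.succ_pos j)]
  | succ m =>
    obtain ⟨N', rfl⟩ : ∃ N', N = N' + 1 := ⟨N - 1, by omega⟩
    rw [Finset.sum_range_succ']
    have hterm : ∀ j, ((j+1 : ℕ) : ℤ) * ((-1:ℤ) ^ (m + 1 - (j+1)) * ((m+1).choose (j+1) : ℤ))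
        = ((m+1 : ℕ) : ℤ) * ((-1:ℤ) ^ (m - j) * (m.choose j : ℤ)) := by
      intro j
      have := Nat.add_one_mul_choose_eq m j
      have h2 : ((m+1) * m.choose j : ℤ) = ((m+1).choose (j+1) * (j+1) : ℤ) := by
        exact_mod_cast congrArg (Nat.cast : ℕ → ℤ) this
      have h3 : m + 1 - (j + 1) = m - j := by omega
      rw [h3]; push_cast; push_cast at h2; linear_combination (-(-1:ℤ)^(m-j)) * h2
    simp only [hterm]
    rw [← Finset.mul_sum, Nat.cast_zero, zero_mul, add_zero,
      A0 N' m (by omega)]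
    rcases Nat.eq_zero_or_pos m with rfl | hm
    · norm_num
    · rw [if_neg (by omega), if_neg (by omega), mul_zero]

lemma innerT (t m : ℕ) (hm : m ≤ t) :
    ∑ i ∈ Finset.range (t+1), (i:ℤ) * ((-1:ℤ) ^ (m - (t-i)) * (m.choose (t-i) : ℤ))
      = t * (if m = 0 then 1 else 0) - (if m = 1 then 1 else 0) := by
  rw [← Finset.sum_range_reflect]
  have : ∀ j ∈ Finset.range (t+1),
      ((t + 1 - 1 - j : ℕ) : ℤ) * ((-1:ℤ) ^ (m - (t - (t + 1 - 1 - j))) *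
        (m.choose (t - (t + 1 - 1 - j)) : ℤ))
      = (t:ℤ) * ((-1:ℤ) ^ (m - j) * (m.choose j : ℤ))
        - (j:ℤ) * ((-1:ℤ) ^ (m - j) * (m.choose j : ℤ)) := by
    intro j hj
    rw [Finset.mem_range, Nat.lt_succ_iff] at hj
    have h1 : t + 1 - 1 - j = t - j := by omega
    have h2 : t - (t - j) = j := by omega
    rw [h1, h2, Nat.cast_sub hj]; ring
  rw [Finset.sum_congr rfl this, Finset.sum_sub_distrib, ← Finset.mul_sum,
    A0 t m hm, A1 t m hm]

lemma mem_star_iff (t : ℕ) (F : Finset (Finset (Fin t))) (s : Finset (Fin t)) :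
    s ∈ star t F ↔ sᶜ ∉ F := by
  show s ∈ (Finset.univ \ F).image (fun G => Gᶜ) ↔ _
  simp only [Finset.mem_image, Finset.mem_sdiff, Finset.mem_univ, true_and]
  constructor
  · rintro ⟨G, hG, rfl⟩; simpa using hG
  · intro h; exact ⟨sᶜ, h, by simp⟩

lemma dualN (t : ℕ) (F : Finset (Finset (Fin t))) (hF : star t F = F) (k : ℕ) (hk : k ≤ t) :
    fVec t F k + fVec t F (t - k) = t.choose k := by
  have hmem : ∀ s : Finset (Fin t), s ∈ F ↔ sᶜ ∉ F := by
    intro s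
    have h := mem_star_iff t F s
    rwa [hF] at h
  have h1 : (Finset.univ.filter fun s : Finset (Fin t) => s.card = k).card = t.choose k := by
    rw [show (Finset.univ.filter fun s : Finset (Fin t) => s.card = k)
        = Finset.powersetCard k Finset.univ from by
      rw [Finset.powersetCard_eq_filter, Finset.powerset_univ]]
    rw [Finset.card_powersetCard, Finset.card_univ, Fintype.card_fin]
  have h2 := Finset.card_filter_add_card_filter_not
    (s := Finset.univ.filter fun s : Finset (Fin t) => s.card = k) (p := fun s => s ∈ F)
  have e1 : ((Finset.univ.filter fun s : Finset (Fin t) => s.card = k).filter (fun s => s ∈ F))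
      = F.filter fun s => s.card = k := by
    ext s; simp [and_comm]
  have e2 : ((Finset.univ.filter fun s : Finset (Fin t) => s.card = k).filter
      (fun s => ¬ s ∈ F)).card = fVec t F (t - k) := by
    refine Finset.card_bij (fun s _ => sᶜ) ?_ ?_ ?_
    · intro s hs
      simp only [Finset.mem_filter, Finset.mem_univ, true_and] at hs ⊢
      refine ⟨?_, ?_⟩
      · by_contra h
        exact hs.2 ((hmem s).2 h)
      · rw [Finset.card_compl, Fintype.card_fin, hs.1]
    · intro a _ b _ h; exact compl_injective h
    · intro u hu
      simp only [Finset.mem_filter, Finset.mem_univ, true_and] at hu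
      refine ⟨uᶜ, ?_, by simp⟩
      simp only [Finset.mem_filter, Finset.mem_univ, true_and]
      constructor
      · rw [Finset.card_compl, Fintype.card_fin, hu.2]; omega
      · intro h
        exact ((hmem uᶜ).1 h) (by simpa using hu.1)
  rw [e1] at h2
  rw [e2, h1] at h2
  exact h2

lemma hVec_eq (t : ℕ) (F : Finset (Finset (Fin t))) (i : ℕ) :
    hVec t F i = ∑ k ∈ Finset.range (t+1), (fVec t F k : ℤ) *
      ((-1:ℤ)^((t-k) - (t-i)) * (((t-k).choose (t-i)) : ℤ)) := by
  unfold hVec hPoly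
  rw [finset_sum_coeff]
  refine Finset.sum_congr rfl fun k _ => ?_
  rw [coeff_C_mul, coeff_sub_one_pow]

theorem stmt17 (t : ℕ) (F : Finset (Finset (Fin t))) (hF : star t F = F) :
    (∑ k ∈ Finset.Icc 2 t, (k : ℤ) * hVec t F k = 0) ∧
      (Even t → hVec t F t = 0) := by
  have hdual := dualN t F hF
  constructor
  · rcases lt_or_ge t 2 with h2 | h2
    · rw [Finset.Icc_eq_empty (by omega), Finset.sum_empty]
    · obtain ⟨u, rfl⟩ : ∃ u, t = u + 2 := ⟨t - 2, by omega⟩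
      have step1 : ∑ i ∈ Finset.range (u+2+1), (i:ℤ) * hVec (u+2) F i
          = ∑ k ∈ Finset.range (u+2+1), (fVec (u+2) F k : ℤ) *
              (((u+2:ℕ):ℤ) * (if u+2-k = 0 then 1 else 0) - (if u+2-k = 1 then 1 else 0)) := by
        calc ∑ i ∈ Finset.range (u+2+1), (i:ℤ) * hVec (u+2) F i
            = ∑ i ∈ Finset.range (u+2+1), ∑ k ∈ Finset.range (u+2+1), (fVec (u+2) F k : ℤ) *
                ((i:ℤ) * ((-1:ℤ)^((u+2-k) - (u+2-i)) * (((u+2-k).choose (u+2-i)) : ℤ))) := by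
              refine Finset.sum_congr rfl fun i _ => ?_
              rw [hVec_eq, Finset.mul_sum]
              exact Finset.sum_congr rfl fun k _ => by ring
          _ = ∑ k ∈ Finset.range (u+2+1), ∑ i ∈ Finset.range (u+2+1), (fVec (u+2) F k : ℤ) *
                ((i:ℤ) * ((-1:ℤ)^((u+2-k) - (u+2-i)) * (((u+2-k).choose (u+2-i)) : ℤ))) :=
              Finset.sum_comm
          _ = _ := by
              refine Finset.sum_congr rfl fun k hk => ?_
              rw [Finset.mem_range, Nat.lt_succ_iff] at hk
              rw [← Finset.mul_sum, innerT (u+2) (u+2-k) (by omega)]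
      have hzero : ∑ k ∈ Finset.range (u+1), (fVec (u+2) F k : ℤ) *
          (((u+2:ℕ):ℤ) * (if u+2-k = 0 then 1 else 0) - (if u+2-k = 1 then 1 else 0)) = 0 := by
        refine Finset.sum_eq_zero fun k hk => ?_
        rw [Finset.mem_range, Nat.lt_succ_iff] at hk
        rw [if_neg (by omega), if_neg (by omega)]
        ring
      have step2 : ∑ i ∈ Finset.range (u+2+1), (i:ℤ) * hVec (u+2) F i
          = ((u+2:ℕ):ℤ) * fVec (u+2) F (u+2) - fVec (u+2) F (u+1) := by
        rw [step1, show u+2+1 = (u+1)+1+1 from rfl, Finset.sum_range_succ,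
          Finset.sum_range_succ, hzero]
        rw [show u+2-(u+1) = 1 from by omega, show u+2-(u+2) = 0 from by omega]
        norm_num
        ring
      have hv1 : hVec (u+2) F 1 = (fVec (u+2) F 1 : ℤ) - ((u+2:ℕ):ℤ) * fVec (u+2) F 0 := by
        rw [hVec_eq, show u+2+1 = (u+1)+1+1 from rfl, Finset.sum_range_succ',
          Finset.sum_range_succ']
        have hz : ∑ i ∈ Finset.range (u+1), (fVec (u+2) F (i+1+1) : ℤ) *
            ((-1:ℤ)^((u+2-(i+1+1)) - (u+2-1)) * (((u+2-(i+1+1)).choose (u+2-1)) : ℤ)) = 0 := by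
          refine Finset.sum_eq_zero fun i hi => ?_
          rw [Finset.mem_range, Nat.lt_succ_iff] at hi
          rw [Nat.choose_eq_zero_of_lt (by omega)]
          ring
        rw [hz]
        rw [show u+2-0 = u+2 from by omega]
        simp only [show u+2-(0+1) = u+1 from by omega, show u+2-1 = u+1 from by omega,
          show u+2-(u+1) = 1 from by omega, Nat.sub_self, Nat.choose_self,
          show (u+2).choose (u+1) = u+2 from Nat.choose_succ_self_right (u+1)]
        push_cast
        ring
      have hins : Finset.range (u+2+1) = insert 0 (insert 1 (Finset.Icc 2 (u+2))) := by
        ext x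
        simp only [Finset.mem_range, Finset.mem_insert, Finset.mem_Icc]
        omega
      have hsum : (0:ℤ) * hVec (u+2) F 0 + ((1:ℤ) * hVec (u+2) F 1
          + ∑ i ∈ Finset.Icc 2 (u+2), (i:ℤ) * hVec (u+2) F i)
          = ((u+2:ℕ):ℤ) * fVec (u+2) F (u+2) - fVec (u+2) F (u+1) := by
        rw [← step2, hins, Finset.sum_insert (by simp), Finset.sum_insert (by simp)]
        norm_num
      have d0 := hdual 0 (by omega)
      have d1 := hdual 1 (by omega)
      rw [Nat.sub_zero, Nat.choose_zero_right] at d0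
      rw [show u+2-1 = u+1 from by omega, Nat.choose_one_right] at d1
      have d0' : (fVec (u+2) F 0 : ℤ) + fVec (u+2) F (u+2) = 1 := by
        exact_mod_cast congrArg (Nat.cast : ℕ → ℤ) d0
      have d1' : (fVec (u+2) F 1 : ℤ) + fVec (u+2) F (u+1) = ((u+2:ℕ):ℤ) := by
        exact_mod_cast congrArg (Nat.cast : ℕ → ℤ) d1
      have hS : ∑ i ∈ Finset.Icc 2 (u+2), (i:ℤ) * hVec (u+2) F i
          = ((u+2:ℕ):ℤ) * fVec (u+2) F (u+2) - fVec (u+2) F (u+1)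
            - ((fVec (u+2) F 1 : ℤ) - ((u+2:ℕ):ℤ) * fVec (u+2) F 0) := by
        rw [← hv1]; linarith [hsum]
      rw [hS]
      linear_combination ((u+2:ℕ):ℤ) * d0' - d1'
  · intro ht
    rcases Nat.eq_zero_or_pos t with rfl | hpos
    · exfalso
      have h := hdual 0 le_rfl
      rw [Nat.sub_zero, Nat.choose_zero_right] at h
      omega
    · have par : ∀ j, j ≤ t → ((-1:ℤ))^j = (-1)^(t-j) := by
        intro j hj
        have hiff : Even (t - j) ↔ Even j := by
          rw [Nat.even_sub hj]
          exact ⟨fun h => h.1 ht, fun h => ⟨fun _ => h, fun _ => ht⟩⟩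
        rcases Nat.even_or_odd j with he | ho
        · rw [he.neg_one_pow, (hiff.2 he).neg_one_pow]
        · have hoj : ¬ Even j := Nat.not_even_iff_odd.2 ho
          have hno : ¬ Even (t - j) := fun h => hoj (hiff.1 h)
          rw [ho.neg_one_pow, (Nat.not_even_iff_odd.1 hno).neg_one_pow]
      have hvt : hVec t F t = ∑ k ∈ Finset.range (t+1),
          (fVec t F k : ℤ) * (-1:ℤ)^(t-k) := by
        rw [hVec_eq]
        refine Finset.sum_congr rfl fun k _ => ?_
        rw [Nat.sub_self, Nat.sub_zero, Nat.choose_zero_right]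
        push_cast; ring
      have key : hVec t F t
          = (∑ k ∈ Finset.range (t+1), (-1:ℤ)^(t-k) * (t.choose k : ℤ))
            - ∑ k ∈ Finset.range (t+1), (fVec t F (t-k) : ℤ) * (-1:ℤ)^(t-k) := by
        rw [hvt, ← Finset.sum_sub_distrib]
        refine Finset.sum_congr rfl fun k hk => ?_
        rw [Finset.mem_range, Nat.lt_succ_iff] at hk
        have hd := hdual k hk
        have h' : (fVec t F k : ℤ) = (t.choose k : ℤ) - fVec t F (t-k) := by
          have hc := congrArg (Nat.cast : ℕ → ℤ) hd
          push_cast at hc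
          linarith
        rw [h']; ring
      have refl2 : ∑ k ∈ Finset.range (t+1), (fVec t F (t-k) : ℤ) * (-1:ℤ)^(t-k)
          = ∑ k ∈ Finset.range (t+1), (fVec t F k : ℤ) * (-1:ℤ)^k := by
        rw [← Finset.sum_range_reflect (fun k => (fVec t F k : ℤ) * (-1:ℤ)^k) (t+1)]
        exact Finset.sum_congr rfl fun k _ => by rw [Nat.add_sub_cancel]
      have refl3 : ∑ k ∈ Finset.range (t+1), (fVec t F k : ℤ) * (-1:ℤ)^k
          = hVec t F t := by
        rw [hvt]
        refine Finset.sum_congr rfl fun k hk => ?_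
        rw [Finset.mem_range, Nat.lt_succ_iff] at hk
        rw [par k hk]
      rw [refl2, refl3, A0 t t le_rfl, if_neg (by omega)] at key
      linarith
end
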